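/- Let X = ℤ/2ℤ with biquandle operations x ▷ y = x ▷̄ y = x + 1, let R = ℤ/7ℤ, let δ = 6, and let A, B : X × X → ℤ/7ℤ be given (indexing elements of X as 1, 2) by A₁₁ = 1, A₁₂ = 5, A₂₁ = 4, A₂₂ = 1, B₁₁ = 3, B₁₂ = 1, B₂₁ = 5, B₂₂ = 3. Then for all x, y, z ∈ X the five biquandle bracket exchange equations hold: (1) A_{x,y}A_{y,z}A_{x▷y, z▷̄y} = A_{x,z}A_{y▷̄x, z▷̄x}A_{x▷z, y▷z}; (2) A_{x,y}B_{y,z}B_{x▷y, z▷̄y} = B_{x,z}B_{y▷̄x, z▷̄x}A_{x▷z, y▷z}; (3) B_{x,y}A_{y,z}B_{x▷y, z▷̄y} = B_{x,z}A_{y▷̄x, z▷̄x}B_{x▷z, y▷z}; (4) A_{x,y}A_{y,z}B_{x▷y, z▷̄y} = A_{x,z}B_{y▷̄x, z▷̄x}A_{x▷z, y▷z} + A_{x,z}A_{y▷̄x, z▷̄x}B_{x▷z, y▷z} + δ·A_{x,z}B_{y▷̄x, z▷̄x}B_{x▷z, y▷z} + B_{x,z}B_{y▷̄x, z▷̄x}B_{x▷z,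 y▷z}; (5) B_{x,y}A_{y,z}A_{x▷y, z▷̄y} + A_{x,y}B_{y,z}A_{x▷y, z▷̄y} + δ·B_{x,y}B_{y,z}A_{x▷y, z▷̄y} + B_{x,y}B_{y,z}B_{x▷y, z▷̄y} = B_{x,z}A_{y▷̄x, z▷̄x}A_{x▷z, y▷z}. -/
import Mathlib

/-- The five biquandle bracket exchange equations hold for the bracket over the biquandle
`X = ℤ/2ℤ` with operations `x ▷ y = x ▷̄ y = x + 1` and ring `R = ℤ/7ℤ`, with values
`A₁₁ = 1, A₁₂ = 5, A₂₁ = 4, A₂₂ = 1`, `B₁₁ = 3, B₁₂ = 1, B₂₁ = 5, B₂₂ = 3` and `δ = 6`. -/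
theorem biquandle_bracket_exchange (A B : ZMod 2 → ZMod 2 → ZMod 7) (δ : ZMod 7)
    (hδ : δ = 6)
    (hA11 : A 1 1 = 1) (hA12 : A 1 2 = 5) (hA21 : A 2 1 = 4) (hA22 : A 2 2 = 1)
    (hB11 : B 1 1 = 3) (hB12 : B 1 2 = 1) (hB21 : B 2 1 = 5) (hB22 : B 2 2 = 3)
    (und ovr : ZMod 2 → ZMod 2 → ZMod 2)
    (hund : ∀ x y, und x y = x + 1) (hovr : ∀ x y, ovr x y = x + 1) :
    ∀ x y z : ZMod 2,
      (A x y * A y z * A (und x y) (ovr z y)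
        = A x z * A (ovr y x) (ovr z x) * A (und x z) (und y z)) ∧
      (A x y * B y z * B (und x y) (ovr z y)
        = B x z * B (ovr y x) (ovr z x) * A (und x z) (und y z)) ∧
      (B x y * A y z * B (und x y) (ovr z y)
        = B x z * A (ovr y x) (ovr z x) * B (und x z) (und y z)) ∧
      (A x y * A y z * B (und x y) (ovr z y)
        = A x z * B (ovr y x) (ovr z x) * A (und x z) (und y z)
          + A x z * A (ovr y x) (ovr z x) * B (und x z) (und y z)
          + δ * A x z * B (ovr y x) (ovr z x) * B (und x z) (und y z)
          + B x z * B (ovr y x) (ovr z x) * B (und x z) (und y z)) ∧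
      (B x y * A y z * A (und x y) (ovr z y)
          + A x y * B y z * A (und x y) (ovr z y)
          + δ * B x y * B y z * A (und x y) (ovr z y)
          + B x y * B y z * B (und x y) (ovr z y)
        = B x z * A (ovr y x) (ovr z x) * A (und x z) (und y z)) := by
  have h2 : (2 : ZMod 2) = 0 := rfl
  rw [h2] at hA12 hA21 hA22 hB12 hB21 hB22
  have e1 : (0 : ZMod 2) + 1 = 1 := rfl
  have e2 : (1 : ZMod 2) + 1 = 0 := rfl
  have hc : ∀ a : ZMod 2, a = 0 ∨ a = 1 := by decide
  intro x y z
  rcases hc x with hx | hx <;> rcases hc y with hy | hy <;> rcases hc z with hz | hz <;>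
    subst hx <;> subst hy <;> subst hz <;>
    simp only [hund, hovr, hδ, e1, e2, hA11, hA12, hA21, hA22, hB11, hB12, hB21, hB22] <;>
    decide
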